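/- The join of two connected compact spaces, each containing at least one point, is simply connected. -/

import Mathlib

open unitInterval Topology

/-- The join relation on `X × Y × [0,1]`: identify `(x, y, 0) ~ (x, y', 0)` and
`(x, y, 1) ~ (x', y, 1)`. -/
def JoinRel (X Y : Type*) : X × Y × I → X × Y × I → Prop := fun p q =>
  (p.2.2 = 0 ∧ q.2.2 = 0 ∧ p.1 = q.1) ∨ (p.2.2 = 1 ∧ q.2.2 = 1 ∧ p.2.1 = q.2.1)

/-- The topological join `X * Y`. -/
def TopJoin (X Y : Type*) : Type _ := Quot (JoinRel X Y)

instance (X Y : Type*) [TopologicalSpace X] [TopologicalSpace Y] :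
    TopologicalSpace (TopJoin X Y) :=
  inferInstanceAs (TopologicalSpace (Quot _))

/-!
Cover the join by `U = {t < 1}` and `V = {t > 0}`. Flattening `t` to `0` deforms `U` onto the
copy of `X` at `t = 0`, which is coned off inside the join along the lines through a fixed `y₀`;
so any two paths in `U` with common endpoints are homotopic in the join, and by the symmetry
`X * Y ≅ Y * X` the same holds for `V`. Moving all three coordinates at once joins every point to
a base point and keeps `t` between its initial and final values, so `U`, `V` and `U ∩ V` are
path connected. Now choose, for every point `z`, a path class `c z` from a base point in `U ∩ V`
to `z` inside `U` or `V`. Every path inside `U` or inside `V` from `z` to `w` has class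
`(c z)⁻¹ · c w`; subdividing an arbitrary loop into such pieces and telescoping shows it is
null-homotopic.
-/

open Set

def Set.PathsHomotopic {A : Type*} [TopologicalSpace A] (s : Set A) : Prop :=
  ∀ ⦃x y : A⦄ (p q : Path x y), range p ⊆ s → range q ⊆ s → p.Homotopic q

section PathsHomotopic

variable {A B : Type*} [TopologicalSpace A] [TopologicalSpace B]

theorem ContinuousMap.Nullhomotopic.map_homotopic {f : C(A, B)} (hf : f.Nullhomotopic)
    {x y : A} (p q : Path x y) : (p.map f.continuous).Homotopic (q.map f.continuous) := by
  obtain ⟨c, ⟨F⟩⟩ := hf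
  rw [← Path.Homotopic.Quotient.eq]
  have h := Path.Homotopic.Quotient.eq.2
    ((Path.Homotopic.map_trans_evalAt F p).trans (Path.Homotopic.map_trans_evalAt F q).symm)
  rw [Path.Homotopic.Quotient.mk_trans, Path.Homotopic.Quotient.mk_trans] at h
  simpa using congrArg (·.trans (Path.Homotopic.Quotient.mk (F.evalAt y)).symm) h

theorem Set.PathsHomotopic.of_nullhomotopic {s : Set A}
    (hs : (⟨Subtype.val, continuous_subtype_val⟩ : C(s, A)).Nullhomotopic) :
    s.PathsHomotopic := by
  intro x y p q hp hq
  let lift (r : Path x y) (hr : range r ⊆ s) :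
      Path (⟨x, hp ⟨0, p.source⟩⟩ : s) ⟨y, hp ⟨1, p.target⟩⟩ :=
    { toFun t := ⟨r t, hr ⟨t, rfl⟩⟩
      source' := Subtype.ext r.source
      target' := Subtype.ext r.target }
  exact hs.map_homotopic (lift p hp) (lift q hq)

theorem Set.PathsHomotopic.preimage {s : Set B} (hs : s.PathsHomotopic) {f : C(A, B)}
    {g : C(B, A)} (hgf : Function.LeftInverse g f) : (f ⁻¹' s).PathsHomotopic := by
  intro x y p q hp hq
  have hmap (r : Path x y) : (r.map f.continuous).map g.continuous = r.cast (hgf x) (hgf y) :=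
    Path.ext (funext fun t => hgf (r t))
  have h := (hs (p.map f.continuous) (q.map f.continuous)
    (range_subset_iff.2 fun t => hp ⟨t, rfl⟩)
    (range_subset_iff.2 fun t => hq ⟨t, rfl⟩)).map g
  rwa [hmap, hmap] at h

end PathsHomotopic

section Cover

variable {A : Type*} [TopologicalSpace A]

namespace Path.Homotopic.Quotient

theorem mk_eq_symm_trans_of_isOpen_cover {ι : Type*} {U : ι → Set A} (hUo : ∀ i, IsOpen (U i))
    (hcover : ⋃ i, U i = univ) {x₀ : A} (c : ∀ z, Path.Homotopic.Quotient x₀ z)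
    (hc : ∀ i ⦃z w : A⦄ (p : Path z w), range p ⊆ U i → mk p = (c z).symm.trans (c w))
    ⦃z w : A⦄ (γ : Path z w) : mk γ = (c z).symm.trans (c w) := by
  obtain ⟨t, ht0, ht_mono, ⟨n, htn⟩, ht_sub⟩ :=
    exists_monotone_Icc_subset_open_cover_unitInterval (fun i => (hUo i).preimage γ.continuous)
      (by rw [← preimage_iUnion, hcover, preimage_univ])
  have telescope (k : ℕ) : mk (γ.subpath 0 (t k)) = (c (γ 0)).symm.trans (c (γ (t k))) := by
    induction k with
    | zero => rw [ht0, subpath_self, mk_refl, symm_trans]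
    | succ k ih =>
      obtain ⟨i, hi⟩ := ht_sub k
      have hrange : range (γ.subpath (t k) (t (k + 1))) ⊆ U i := by
        rw [range_subpath_of_le _ _ _ (ht_mono k.le_succ), image_subset_iff]
        exact hi
      rw [← eq.2 ⟨Homotopy.subpathTransSubpath γ 0 (t k) (t (k + 1))⟩, mk_trans, ih,
        hc i _ hrange, trans_assoc, ← trans_assoc (c _), trans_symm, refl_trans]
  have hγ := telescope n
  rw [htn n le_rfl, subpath_zero_one, mk_cast] at hγ
  have uncast : ∀ {a b : A} (ha : a = z) (hb : b = w),
      (mk γ).cast ha hb = (c a).symm.trans (c b) → mk γ = (c z).symm.trans (c w) := by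
    rintro _ _ rfl rfl h
    simpa using h
  exact uncast _ _ hγ

theorem mk_eq_symm_trans_of_pathsHomotopic {W : Set A} (hW : W.PathsHomotopic) {x₀ : A}
    (c : ∀ z, Path.Homotopic.Quotient x₀ z)
    (hc : ∀ z ∈ W, ∃ q : Path x₀ z, range q ⊆ W ∧ c z = mk q)
    ⦃z w : A⦄ (p : Path z w) (hp : range p ⊆ W) : mk p = (c z).symm.trans (c w) := by
  obtain ⟨qz, hqz, hcz⟩ := hc z (hp ⟨0, p.source⟩)
  obtain ⟨qw, hqw, hcw⟩ := hc w (hp ⟨1, p.target⟩)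
  have h := eq.2 (hW (qz.trans p) qw (by rw [trans_range]; exact union_subset hqz hp) hqw)
  rw [mk_trans, ← hcz, ← hcw] at h
  rw [← h, ← trans_assoc, symm_trans, refl_trans]

end Path.Homotopic.Quotient

open Path.Homotopic.Quotient in
theorem simplyConnectedSpace_of_isOpen_cover {U V : Set A} (hUo : IsOpen U) (hVo : IsOpen V)
    (hcover : U ∪ V = univ) (hU : IsPathConnected U) (hV : IsPathConnected V)
    (hUV : IsPathConnected (U ∩ V)) (hU' : U.PathsHomotopic) (hV' : V.PathsHomotopic) :
    SimplyConnectedSpace A := by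
  classical
  obtain ⟨x₀, hx₀⟩ := hUV.nonempty
  have hmemV (z : A) (hz : z ∉ U) : z ∈ V :=
    (hcover.symm ▸ mem_univ z : z ∈ U ∪ V).resolve_left hz
  let c (z : A) : Path.Homotopic.Quotient x₀ z :=
    if hz : z ∈ U then mk (hU.joinedIn x₀ hx₀.1 z hz).somePath
    else mk (hV.joinedIn x₀ hx₀.2 z (hmemV z hz)).somePath
  have hcU : ∀ z ∈ U, ∃ q : Path x₀ z, range q ⊆ U ∧ c z = mk q := fun z hz =>
    ⟨_, range_subset_iff.2 (JoinedIn.somePath_mem _), dif_pos hz⟩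
  have hcV : ∀ z ∈ V, ∃ q : Path x₀ z, range q ⊆ V ∧ c z = mk q := by
    intro z hzV
    by_cases hzU : z ∈ U
    · -- `c z` was chosen inside `U`; it agrees with the class of a path inside `U ∩ V`
      obtain ⟨q, hq⟩ := hUV.joinedIn x₀ hx₀ z ⟨hzU, hzV⟩
      refine ⟨q, fun _ ⟨t, ht⟩ => ht ▸ (hq t).2, (dif_pos hzU).trans (eq.2 ?_)⟩
      exact hU' _ _ (range_subset_iff.2 (JoinedIn.somePath_mem _))
        (fun _ ⟨t, ht⟩ => ht ▸ (hq t).1)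
    · exact ⟨_, range_subset_iff.2 (JoinedIn.somePath_mem _), dif_neg hzU⟩
  have hc := mk_eq_symm_trans_of_isOpen_cover (U := fun b => cond b U V)
    (fun b => by cases b <;> assumption) (by rw [← union_eq_iUnion, hcover]) c
    (fun b => by
      cases b
      · exact mk_eq_symm_trans_of_pathsHomotopic hV' c hcV
      · exact mk_eq_symm_trans_of_pathsHomotopic hU' c hcU)
  refine simply_connected_iff_loops_nullhomotopic.2
    ⟨pathConnectedSpace_iff_univ.2 (hcover ▸ hU.union hV ⟨x₀, hx₀⟩), fun x γ => ?_⟩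
  rw [← eq, hc γ, symm_trans, mk_refl]

end Cover

theorem Topology.IsQuotientMap.exists_continuousMap_prod_lift {E B Y Z : Type*}
    [TopologicalSpace E] [TopologicalSpace B] [TopologicalSpace Y] [TopologicalSpace Z]
    [LocallyCompactSpace Y] {π : E → B} (hπ : IsQuotientMap π) {W : Set B} (hW : IsOpen W)
    {F : Y × E → Z} (hF : Continuous F)
    (hFW : ∀ y e e', π e = π e' → π e ∈ W → F (y, e) = F (y, e')) :
    ∃ G : C(Y × W, Z), ∀ y e (he : π e ∈ W), G (y, ⟨π e, he⟩) = F (y, e) := by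
  have hρ := hπ.restrictPreimage_isOpen hW
  let s := Function.surjInv hρ.surjective
  have hs (y : Y) (e : π ⁻¹' W) : F (y, s (W.restrictPreimage π e)) = F (y, e) :=
    hFW y _ _ (congrArg Subtype.val (Function.surjInv_eq hρ.surjective _)) (s _).2
  refine ⟨⟨fun p => F (p.1, s p.2), hρ.continuous_lift_prod_right ?_⟩,
    fun y e he => hs y ⟨e, he⟩⟩
  simp only [hs]
  fun_prop

namespace TopJoin

section Quotient

variable {X Y : Type*}

abbrev mk (e : X × Y × I) : TopJoin X Y := Quot.mk _ e

theorem mk_zero_eq (x : X) (y y' : Y) : mk (x, y, 0) = mk (x, y', 0) :=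
  Quot.sound (.inl ⟨rfl, rfl, rfl⟩)

theorem mk_one_eq (x x' : X) (y : Y) : mk (x, y, 1) = mk (x', y, 1) :=
  Quot.sound (.inr ⟨rfl, rfl, rfl⟩)

theorem mk_eq_mk_iff {e e' : X × Y × I} : mk e = mk e' ↔ e = e' ∨ JoinRel X Y e e' := by
  have hequiv : Equivalence fun e e' => e = e' ∨ JoinRel X Y e e' := by
    have h01 : (0 : I) ≠ 1 := zero_ne_one
    refine ⟨fun _ => .inl rfl, ?_, ?_⟩ <;> unfold JoinRel <;> grind
  refine ⟨fun h => hequiv.eqvGen_iff.1 ((Quot.eq.1 h).mono fun _ _ => .inr), ?_⟩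
  rintro (rfl | h)
  exacts [rfl, Quot.sound h]

def height : TopJoin X Y → I :=
  Quot.lift (fun e => e.2.2) (by rintro _ _ (⟨h, h', -⟩ | ⟨h, h', -⟩) <;> rw [h, h'])

def swap : TopJoin X Y → TopJoin Y X :=
  Quot.lift (fun e => mk (e.2.1, e.1, σ e.2.2)) <| by
    rintro _ _ (⟨h, h', hx⟩ | ⟨h, h', hy⟩)
    · exact Quot.sound (.inr ⟨by simp [h], by simp [h'], hx⟩)
    · exact Quot.sound (.inl ⟨by simp [h], by simp [h'], hy⟩)

theorem swap_swap : Function.LeftInverse (swap : TopJoin Y X → TopJoin X Y) swap := by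
  rintro ⟨e⟩
  simp [swap]

@[simp] theorem height_swap (p : TopJoin X Y) : height (swap p) = σ (height p) := by
  induction p using Quot.ind
  rfl

end Quotient

variable {X Y : Type*} [TopologicalSpace X] [TopologicalSpace Y]

theorem isQuotientMap_mk : IsQuotientMap (mk : X × Y × I → TopJoin X Y) := isQuotientMap_quot_mk

@[fun_prop] theorem continuous_height : Continuous (height : TopJoin X Y → I) :=
  continuous_quot_lift _ (by fun_prop)

theorem continuous_swap : Continuous (swap : TopJoin X Y → TopJoin Y X) :=
  continuous_quot_lift _ (continuous_quot_mk.comp (by fun_prop))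

theorem exists_continuousMap_lift_height_lt_one {Z : Type*} [TopologicalSpace Z]
    {F : I × (X × Y × I) → Z} (hF : Continuous F)
    (hF₀ : ∀ u x y y', F (u, x, y, 0) = F (u, x, y', 0)) :
    ∃ G : C(I × (height ⁻¹' Iio 1 : Set (TopJoin X Y)), Z),
      ∀ u e (he : height (mk e) < 1), G (u, ⟨mk e, he⟩) = F (u, e) := by
  refine isQuotientMap_mk.exists_continuousMap_prod_lift
    (isOpen_Iio.preimage continuous_height) hF ?_
  rintro u e e' hee' (he : e.2.2 < 1)
  obtain rfl | ⟨h, h', hx⟩ | ⟨h, -, -⟩ := mk_eq_mk_iff.1 hee'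
  · rfl
  · obtain ⟨x, y, t⟩ := e
    obtain ⟨x', y', t'⟩ := e'
    dsimp only at h h' hx
    subst h h' hx
    exact hF₀ u x y y'
  · exact absurd h he.ne

theorem nullhomotopic_val_height_lt_one (x₀ : X) (y₀ : Y) :
    (⟨Subtype.val, continuous_subtype_val⟩ :
      C(height ⁻¹' Iio 1, TopJoin X Y)).Nullhomotopic := by
  -- flatten `t` down to `0`, then climb from `(x, y₀, 0)` to `(x, y₀, 1) = (x₀, y₀, 1)`
  obtain ⟨G₁, hG₁⟩ := exists_continuousMap_lift_height_lt_one
    (F := fun q : I × (X × Y × I) => mk (q.2.1, q.2.2.1, σ q.1 * q.2.2.2)) (by fun_prop)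
    (fun _ _ _ _ => by simp only [mul_zero, mk_zero_eq _ _ y₀])
  obtain ⟨G₂, hG₂⟩ := exists_continuousMap_lift_height_lt_one
    (F := fun q : I × (X × Y × I) => mk (q.2.1, y₀, q.1)) (by fun_prop) (fun _ _ _ _ => rfl)
  let g : C(height ⁻¹' Iio 1, TopJoin X Y) := G₁.comp (.prodMk (.const _ 1) (.id _))
  refine ⟨mk (x₀, y₀, 1), ContinuousMap.Homotopic.trans (g := g)
    ⟨{ toContinuousMap := G₁, map_zero_left := ?_, map_one_left := fun _ => rfl }⟩
    ⟨{ toContinuousMap := G₂, map_zero_left := ?_, map_one_left := ?_ }⟩⟩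
  all_goals rintro ⟨⟨x, y, t⟩, he⟩
  · exact (hG₁ 0 (x, y, t) he).trans (by simp)
  · exact (hG₂ 0 (x, y, t) he).trans
      ((mk_zero_eq x y₀ y).trans (by simp [g, hG₁ 1 (x, y, t) he]))
  · exact (hG₂ 1 (x, y, t) he).trans (mk_one_eq x x₀ y₀)

theorem isPathConnected_height_preimage [PathConnectedSpace X] [PathConnectedSpace Y]
    {S : Set I} (hS : S.OrdConnected) (hne : S.Nonempty) :
    IsPathConnected (height ⁻¹' S : Set (TopJoin X Y)) := by
  obtain ⟨s₀, hs₀⟩ := hne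
  obtain ⟨x₀⟩ := PathConnectedSpace.nonempty (X := X)
  obtain ⟨y₀⟩ := PathConnectedSpace.nonempty (X := Y)
  refine ⟨mk (x₀, y₀, s₀), hs₀, ?_⟩
  rintro ⟨⟨x, y, t⟩⟩ (ht : t ∈ S)
  let γ : Path (mk (x₀, y₀, s₀)) (mk (x, y, t)) :=
    { toFun u := mk (PathConnectedSpace.somePath x₀ x u,
        PathConnectedSpace.somePath y₀ y u, Icc.convexComb s₀ t u)
      source' := by simp
      target' := by simp }
  exact ⟨γ, fun u =>
    hS.uIcc_subset hs₀ ht (Path.range_subpathAux s₀ t ▸ mem_range_self u)⟩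

end TopJoin

open TopJoin in
theorem topJoin_simplyConnected_general (X Y : Type) [TopologicalSpace X] [TopologicalSpace Y]
    [PathConnectedSpace X] [PathConnectedSpace Y] :
    SimplyConnectedSpace (TopJoin X Y) := by
  obtain ⟨x₀⟩ := PathConnectedSpace.nonempty (X := X)
  obtain ⟨y₀⟩ := PathConnectedSpace.nonempty (X := Y)
  have hupper : height ⁻¹' Ioi 0 = swap ⁻¹' (height ⁻¹' Iio 1 : Set (TopJoin Y X)) := by
    ext p
    simp [symm_lt_comm]
  refine simplyConnectedSpace_of_isOpen_cover (U := height ⁻¹' Iio 1) (V := height ⁻¹' Ioi 0)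
    (isOpen_Iio.preimage continuous_height) (isOpen_Ioi.preimage continuous_height)
    (by rw [← preimage_union, Iio_union_Ioi_of_lt zero_lt_one, preimage_univ])
    (isPathConnected_height_preimage ordConnected_Iio ⟨0, mem_Iio.2 zero_lt_one⟩)
    (isPathConnected_height_preimage ordConnected_Ioi ⟨1, mem_Ioi.2 zero_lt_one⟩)
    (by
      rw [← preimage_inter, Iio_inter_Ioi]
      exact isPathConnected_height_preimage ordConnected_Ioo (nonempty_Ioo.2 zero_lt_one))
    (.of_nullhomotopic (nullhomotopic_val_height_lt_one x₀ y₀)) ?_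
  rw [hupper]
  exact (Set.PathsHomotopic.of_nullhomotopic (nullhomotopic_val_height_lt_one y₀ x₀)).preimage
    (f := ⟨swap, continuous_swap⟩) (g := ⟨swap, continuous_swap⟩) swap_swap

/-- The join of two nonempty path-connected compact spaces is simply connected. -/
theorem topJoin_simplyConnected (X Y : Type) [TopologicalSpace X] [TopologicalSpace Y]
    [CompactSpace X] [CompactSpace Y] [Nonempty X] [Nonempty Y]
    [PathConnectedSpace X] [PathConnectedSpace Y] :
    SimplyConnectedSpace (TopJoin X Y) :=
  topJoin_simplyConnected_general X Y
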